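/- (Tight example is submodular.) Let U be a finite type, let k ≥ 1 be a natural number, let O ⊆ U be a finset, and let a, b ∈ U be distinct elements with a ∉ O and b ∉ O. Define f : Finset U → ℝ by: f(C) = 0 if a ∈ C and b ∈ C; f(C) = |C ∩ O|/(2k) + 1/k if exactly one of a, b belongs to C; and f(C) = |C ∩ O|/k if a ∉ C and b ∉ C. Then f is submodular, i.e., f(S ∪ T) + f(S ∩ T) ≤ f(S) + f(T) for all finsets S, T ⊆ U. -/

import Mathlib

/-!
With the modular, monotone functions `m C = #(C ∩ O)`, `x C = #(C ∩ {a})`, `y C = #(C ∩ {b})`,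
checking the four membership patterns of `a, b` gives
`f = (1 / k) • (m + x + y - ½ m x - ½ m y - 2 x y)`.
The product of a monotone modular function with an antitone modular one is submodular, so each
term is submodular, hence so is their nonnegative combination `f`.
-/

open Finset

section Lattice

variable {α : Type*} [Lattice α]

def IsSubmodular (f : α → ℝ) : Prop :=
  ∀ x y, f (x ⊔ y) + f (x ⊓ y) ≤ f x + f y

def IsModular (f : α → ℝ) : Prop :=
  ∀ x y, f (x ⊔ y) + f (x ⊓ y) = f x + f y

theorem IsModular.isSubmodular {f : α → ℝ} (hf : IsModular f) : IsSubmodular f :=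
  fun x y => (hf x y).le

theorem IsModular.neg {f : α → ℝ} (hf : IsModular f) : IsModular (-f) := by
  intro x y
  simp only [Pi.neg_apply]
  linarith [hf x y]

theorem IsSubmodular.add {f g : α → ℝ} (hf : IsSubmodular f) (hg : IsSubmodular g) :
    IsSubmodular (f + g) := by
  intro x y
  simp only [Pi.add_apply]
  linarith [hf x y, hg x y]

theorem IsSubmodular.const_smul {f : α → ℝ} (hf : IsSubmodular f) {c : ℝ} (hc : 0 ≤ c) :
    IsSubmodular (c • f) := by
  intro x y
  simp only [Pi.smul_apply, smul_eq_mul, ← mul_add]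
  exact mul_le_mul_of_nonneg_left (hf x y) hc

theorem IsModular.isSubmodular_mul {f g : α → ℝ} (hf : IsModular f) (hg : IsModular g)
    (hf_mono : Monotone f) (hg_anti : Antitone g) : IsSubmodular (f * g) := by
  intro x y
  simp only [Pi.mul_apply]
  -- by modularity, the submodularity defect is exactly `hx + hy`
  have hx := mul_nonneg (sub_nonneg.2 (hf_mono (inf_le_left : x ⊓ y ≤ x)))
    (sub_nonneg.2 (hg_anti (le_sup_left : x ≤ x ⊔ y)))
  have hy := mul_nonneg (sub_nonneg.2 (hf_mono (inf_le_right : x ⊓ y ≤ y)))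
    (sub_nonneg.2 (hg_anti (le_sup_right : y ≤ x ⊔ y)))
  linear_combination hx + hy + g (x ⊔ y) * hf x y + f (x ⊓ y) * hg x y

end Lattice

section Finset

variable {U : Type*} [DecidableEq U]

def cardInter (s C : Finset U) : ℝ := #(C ∩ s)

theorem isModular_cardInter (s : Finset U) : IsModular (cardInter s) := by
  intro S T
  rw [cardInter, cardInter, cardInter, cardInter, sup_eq_union, inf_eq_inter,
    union_inter_distrib_right, inter_inter_distrib_right]
  exact_mod_cast card_union_add_card_inter (S ∩ s) (T ∩ s)

theorem monotone_cardInter (s : Finset U) : Monotone (cardInter s) :=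
  fun _ _ h => Nat.cast_le.2 (card_le_card (inter_subset_inter_right h))

theorem isSubmodular_cardInter_mul_neg (s t : Finset U) :
    IsSubmodular (cardInter s * -cardInter t) :=
  (isModular_cardInter s).isSubmodular_mul (isModular_cardInter t).neg (monotone_cardInter s)
    (monotone_cardInter t).neg

end Finset

theorem tight_example_submodular_general
    {U : Type*} [DecidableEq U]
    (k : ℕ) (O : Finset U) (a b : U)
    (f : Finset U → ℝ)
    (hf_both : ∀ C : Finset U, a ∈ C → b ∈ C → f C = 0)
    (hf_one : ∀ C : Finset U, (a ∈ C ∧ b ∉ C) ∨ (a ∉ C ∧ b ∈ C) →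
      f C = (C ∩ O).card / (2 * (k : ℝ)) + 1 / (k : ℝ))
    (hf_none : ∀ C : Finset U, a ∉ C → b ∉ C → f C = (C ∩ O).card / (k : ℝ)) :
    ∀ S T : Finset U, f (S ∪ T) + f (S ∩ T) ≤ f S + f T := by
  set m := cardInter O
  set x := cardInter {a}
  set y := cardInter {b}
  have hF : IsSubmodular (m + x + y + (1 / 2 : ℝ) • (m * -x) + (1 / 2 : ℝ) • (m * -y)
      + (2 : ℝ) • (x * -y)) :=
    (((((isModular_cardInter O).isSubmodular.add (isModular_cardInter {a}).isSubmodular).add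
      (isModular_cardInter {b}).isSubmodular).add
      ((isSubmodular_cardInter_mul_neg O {a}).const_smul (by norm_num))).add
      ((isSubmodular_cardInter_mul_neg O {b}).const_smul (by norm_num))).add
      ((isSubmodular_cardInter_mul_neg {a} {b}).const_smul (by norm_num))
  have hf : f = (1 / k : ℝ) • (m + x + y + (1 / 2 : ℝ) • (m * -x) + (1 / 2 : ℝ) • (m * -y)
      + (2 : ℝ) • (x * -y)) := by
    funext C
    simp only [m, x, y, cardInter, Pi.add_apply, Pi.smul_apply, Pi.mul_apply, Pi.neg_apply,
      smul_eq_mul, inter_singleton]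
    by_cases ha : a ∈ C <;> by_cases hb : b ∈ C <;>
      simp only [ha, hb, ↓reduceIte, card_singleton, card_empty, Nat.cast_one, Nat.cast_zero]
    · rw [hf_both C ha hb]; ring
    · rw [hf_one C (.inl ⟨ha, hb⟩)]; ring
    · rw [hf_one C (.inr ⟨ha, hb⟩)]; ring
    · rw [hf_none C ha hb]; ring
  rw [hf]
  exact hF.const_smul (by positivity)

theorem tight_example_submodular
    {U : Type*} [Fintype U] [DecidableEq U]
    (k : ℕ) (hk : 1 ≤ k) (O : Finset U) (a b : U)
    (hab : a ≠ b) (haO : a ∉ O) (hbO : b ∉ O)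
    (f : Finset U → ℝ)
    (hf_both : ∀ C : Finset U, a ∈ C → b ∈ C → f C = 0)
    (hf_one : ∀ C : Finset U, (a ∈ C ∧ b ∉ C) ∨ (a ∉ C ∧ b ∈ C) →
      f C = (C ∩ O).card / (2 * (k : ℝ)) + 1 / (k : ℝ))
    (hf_none : ∀ C : Finset U, a ∉ C → b ∉ C → f C = (C ∩ O).card / (k : ℝ)) :
    ∀ S T : Finset U, f (S ∪ T) + f (S ∩ T) ≤ f S + f T :=
  tight_example_submodular_general k O a b f hf_both hf_one hf_none
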